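/- arXiv:1210.5534 — 4 statements merged into one kernel-verified Lean document; each statement's English description precedes it below -/
import Mathlib

section
/- Let L be the free Lie algebra over ℤ on generators X₁,…,X_m, and let L^{mult}_d denote the ℤ-submodule of its degree-d component spanned by Lie monomials in which each of X₁,…,X_d appears (for a fixed choice of d of the m generators, each appearing exactly once). Then L^{mult}_d is a free ℤ-module of rank (d−1)!, with basis the left-normed brackets [X_{σ(1)},[X_{σ(2)},[…,[X_{σ(d−1)}, X_d]…]]] where σ ranges over permutations of {1,…,d−1}. -/
/-!
A Lie monomial whose content contains the generator `z` lies in the ℤ-span of the left-normed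
brackets `[a₁,[a₂,[…,[a_k, z]…]]]` of the same content: induct on the monomial, using
`ad ⁅u, v⁆ = ad u ∘ ad v - ad v ∘ ad u` to absorb one factor into such a bracket, after moving
the factor containing `z` to the right by antisymmetry. For multilinear content these brackets
are indexed by the orderings of the other generators. They are linearly independent because in
the free associative algebra the bracket with list `l` has coefficient `1` on the word `l z` and
`0` on every other word ending in `z`: in `[a, y] = a y - y a` the words of `y a` end in `a ≠ z`.
-/

inductive IsLieMono {m : ℕ} : FreeLieAlgebra ℤ (Fin m) → Multiset (Fin m) → Prop
  | of (i : Fin m) : IsLieMono (FreeLieAlgebra.of ℤ i) {i}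
  | lie {x y : FreeLieAlgebra ℤ (Fin m)} {s t : Multiset (Fin m)} :
      IsLieMono x s → IsLieMono y t → IsLieMono ⁅x, y⁆ (s + t)

def lnb {L : Type*} [LieRing L] : List L → L
  | [] => 0
  | [a] => a
  | a :: l => ⁅a, lnb l⁆

theorem lnb_cons_of_ne_nil {L : Type*} [LieRing L] (a : L) {l : List L} (hl : l ≠ []) :
    lnb (a :: l) = ⁅a, lnb l⁆ := by
  cases l with
  | nil => exact absurd rfl hl
  | cons b l => rfl

section LeftNormed

variable (R : Type*) {X : Type*} [CommRing R]

noncomputable def leftNormed (z : X) (l : List X) : FreeLieAlgebra R X :=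
  lnb (l.map (FreeLieAlgebra.of R) ++ [FreeLieAlgebra.of R z])

@[simp]
theorem leftNormed_nil (z : X) : leftNormed R z [] = FreeLieAlgebra.of R z := rfl

@[simp]
theorem leftNormed_cons (z a : X) (l : List X) :
    leftNormed R z (a :: l) = ⁅FreeLieAlgebra.of R a, leftNormed R z l⁆ :=
  lnb_cons_of_ne_nil _ (by simp)

noncomputable def spanLeftNormed (z : X) (r : Multiset X) : Submodule R (FreeLieAlgebra R X) :=
  Submodule.span R (leftNormed R z '' {l | (l : Multiset X) = r})

end LeftNormed

section Spanning

variable {m : ℕ}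

theorem isLieMono_leftNormed (z : Fin m) (l : List (Fin m)) :
    IsLieMono (leftNormed ℤ z l) (z ::ₘ l) := by
  induction l with
  | nil => exact IsLieMono.of z
  | cons a l ih =>
    rw [leftNormed_cons, ← Multiset.cons_coe, Multiset.cons_swap, ← Multiset.singleton_add]
    exact IsLieMono.lie (IsLieMono.of a) ih

theorem lie_mem_spanLeftNormed {z : Fin m} {x : FreeLieAlgebra ℤ (Fin m)} {t : Multiset (Fin m)}
    (hx : IsLieMono x t) {r : Multiset (Fin m)} {y : FreeLieAlgebra ℤ (Fin m)}
    (hy : y ∈ spanLeftNormed ℤ z r) : ⁅x, y⁆ ∈ spanLeftNormed ℤ z (t + r) := by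
  induction hx generalizing r y with
  | of i =>
    have hle : spanLeftNormed ℤ z r ≤
        (spanLeftNormed ℤ z ({i} + r)).comap (LieAlgebra.ad ℤ _ (FreeLieAlgebra.of ℤ i)) := by
      refine Submodule.span_le.mpr ?_
      rintro _ ⟨l, rfl : (l : Multiset (Fin m)) = r, rfl⟩
      exact Submodule.subset_span ⟨i :: l, by simp, leftNormed_cons ..⟩
    exact hle hy
  | lie _ _ ihu ihv =>
    rw [lie_lie]
    refine sub_mem ?_ ?_
    · simpa only [add_assoc] using ihu (ihv hy)
    · simpa only [add_assoc, add_left_comm] using ihv (ihu hy)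

theorem mem_spanLeftNormed_erase {z : Fin m} {x : FreeLieAlgebra ℤ (Fin m)}
    {t : Multiset (Fin m)} (hx : IsLieMono x t) (hz : z ∈ t) :
    x ∈ spanLeftNormed ℤ z (t.erase z) := by
  induction hx with
  | of i =>
    obtain rfl := Multiset.mem_singleton.mp hz
    exact Submodule.subset_span ⟨[], by simp, rfl⟩
  | lie hu hv ihu ihv =>
    rcases Multiset.mem_add.mp hz with h | h
    · rw [← lie_skew, Multiset.erase_add_left_pos _ h, add_comm]
      exact neg_mem (lie_mem_spanLeftNormed hv (ihu h))
    · rw [Multiset.erase_add_right_pos _ h]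
      exact lie_mem_spanLeftNormed hu (ihv h)

theorem span_isLieMono_eq_spanLeftNormed {z : Fin m} {s : Multiset (Fin m)} (hz : z ∈ s) :
    Submodule.span ℤ {x | IsLieMono x s} = spanLeftNormed ℤ z (s.erase z) := by
  refine le_antisymm (Submodule.span_le.mpr fun x hx => mem_spanLeftNormed_erase hx hz) ?_
  refine Submodule.span_le.mpr ?_
  rintro _ ⟨l, hl, rfl⟩
  have hmono := isLieMono_leftNormed z l
  rw [show (l : Multiset (Fin m)) = s.erase z from hl, Multiset.cons_erase hz] at hmono
  exact Submodule.subset_span hmono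

end Spanning

theorem List.exists_perm_eq_ofFn_comp {α : Type*} {n : ℕ} {f : Fin n → α}
    (hf : Function.Injective f) {l : List α} (hl : l.Perm (List.ofFn f)) :
    ∃ σ : Equiv.Perm (Fin n), l = List.ofFn (f ∘ σ) := by
  have hlen : l.length = n := by simpa using hl.length_eq
  have hmem (i : Fin n) : ∃ j, f j = l[(i : ℕ)]'(by omega) := by
    simpa [List.mem_ofFn] using hl.subset (List.getElem_mem (by omega))
  choose g hg using hmem
  have hg_inj : Function.Injective g := fun i j hij => Fin.ext <|
    (hl.nodup_iff.mpr (List.nodup_ofFn.mpr hf)).getElem_inj_iff.mp (by rw [← hg, ← hg, hij])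
  refine ⟨Equiv.ofBijective g (Finite.injective_iff_bijective.mp hg_inj), ?_⟩
  refine List.ext_getElem (by simp [hlen]) fun k h₁ h₂ => ?_
  simp [hg]

theorem List.setOf_coe_eq_ofFn_eq_range {α : Type*} {n : ℕ} {f : Fin n → α}
    (hf : Function.Injective f) :
    {l : List α | (l : Multiset α) = List.ofFn f} =
      Set.range fun σ : Equiv.Perm (Fin n) => List.ofFn (f ∘ σ) := by
  ext l
  constructor
  · intro hl
    obtain ⟨σ, rfl⟩ := List.exists_perm_eq_ofFn_comp hf (Multiset.coe_eq_coe.mp hl)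
    exact ⟨σ, rfl⟩
  · rintro ⟨σ, rfl⟩
    exact Multiset.coe_eq_coe.mpr (σ.ofFn_comp_perm f)

section WordAlgebra

variable (R : Type*) (X : Type*) [CommRing R]

attribute [local instance 100] LieRing.ofAssociativeRing

noncomputable def toFreeMonoidAlgebra :
    FreeLieAlgebra R X →ₗ⁅R⁆ MonoidAlgebra R (FreeMonoid X) :=
  FreeLieAlgebra.lift R fun x => MonoidAlgebra.single (FreeMonoid.of x) 1

variable {R X}

theorem coeff_single_of_mul_ofList_cons (a b : X) (u : List X) (r : R)
    (y : MonoidAlgebra R (FreeMonoid X)) [Decidable (b = a)] :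
    (MonoidAlgebra.single (FreeMonoid.of a) r * y).coeff (FreeMonoid.ofList (b :: u)) =
      if b = a then r * y.coeff (FreeMonoid.ofList u) else 0 := by
  split_ifs with h
  · subst h
    exact MonoidAlgebra.coeff_single_mul_mul y r _ _
  · refine MonoidAlgebra.coeff_single_mul_of_forall_mul_ne _ _ fun c hc => h ?_
    exact (by simpa using (congrArg FreeMonoid.toList hc).symm : b = a ∧ _).1

theorem coeff_mul_single_of_ofList_append_singleton {a b : X} (h : b ≠ a) (u : List X) (r : R)
    (y : MonoidAlgebra R (FreeMonoid X)) :
    (y * MonoidAlgebra.single (FreeMonoid.of a) r).coeff (FreeMonoid.ofList (u ++ [b])) = 0 := by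
  refine MonoidAlgebra.coeff_mul_single_of_forall_mul_ne _ _ fun c hc => h ?_
  exact (by simpa using (congrArg FreeMonoid.toList hc).symm : _ ∧ b = a).2

@[simp]
theorem toFreeMonoidAlgebra_of (x : X) :
    toFreeMonoidAlgebra R X (FreeLieAlgebra.of R x) = MonoidAlgebra.single (FreeMonoid.of x) 1 :=
  FreeLieAlgebra.lift_of_apply _ _

theorem coeff_toFreeMonoidAlgebra_leftNormed [DecidableEq X] {z : X} {l : List X} (hz : z ∉ l)
    (w : List X) :
    (toFreeMonoidAlgebra R X (leftNormed R z l)).coeff (FreeMonoid.ofList (w ++ [z])) =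
      if w = l then 1 else 0 := by
  induction l generalizing w with
  | nil =>
    classical
    rw [leftNormed_nil, toFreeMonoidAlgebra_of, MonoidAlgebra.coeff_single, Finsupp.single_apply]
    refine if_congr ?_ rfl rfl
    rw [← FreeMonoid.ofList_singleton, FreeMonoid.ofList.injective.eq_iff]
    simp
  | cons a l ih =>
    rw [List.mem_cons, not_or] at hz
    rw [leftNormed_cons, LieHom.map_lie, Ring.lie_def, MonoidAlgebra.coeff_sub, Finsupp.sub_apply,
      toFreeMonoidAlgebra_of, coeff_mul_single_of_ofList_append_singleton hz.1, sub_zero]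
    cases w with
    | nil =>
      rw [List.nil_append, coeff_single_of_mul_ofList_cons, if_neg hz.1,
        if_neg (List.cons_ne_nil a l).symm]
    | cons b w =>
      rw [List.cons_append, coeff_single_of_mul_ofList_cons, ih hz.2]
      by_cases hb : b = a <;> simp [hb]

theorem linearIndependent_leftNormed (z : X) :
    LinearIndependent R fun l : {l : List X // z ∉ l} => leftNormed R z l.1 := by
  classical
  let coeffAt (l : {l : List X // z ∉ l}) : Module.Dual R (FreeLieAlgebra R X) :=
    Finsupp.lapply (FreeMonoid.ofList (l.1 ++ [z])) ∘ₗ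
      (MonoidAlgebra.coeffLinearEquiv R).toLinearMap ∘ₗ (toFreeMonoidAlgebra R X).toLinearMap
  have hcoeffAt (l l' : {l : List X // z ∉ l}) :
      coeffAt l (leftNormed R z l'.1) = if l = l' then 1 else 0 := by
    simpa [coeffAt, Subtype.ext_iff] using coeff_toFreeMonoidAlgebra_leftNormed (R := R) l'.2 l.1
  refine .of_pairwise_dual_eq_zero_one _ coeffAt (fun l l' h => ?_) (fun l => ?_)
  · simp [hcoeffAt, h]
  · simp [hcoeffAt]

end WordAlgebra

theorem exists_basis_span_isLieMono {m n : ℕ} {f : Fin n → Fin m} (hf : Function.Injective f)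
    {z : Fin m} (hz : z ∉ Set.range f) :
    ∃ b : Module.Basis (Equiv.Perm (Fin n)) ℤ
      (Submodule.span ℤ {x | IsLieMono x (z ::ₘ (List.ofFn f : Multiset (Fin m)))}),
      ∀ σ, (b σ : FreeLieAlgebra ℤ (Fin m)) = leftNormed ℤ z (List.ofFn (f ∘ σ)) := by
  set v := fun σ : Equiv.Perm (Fin n) => leftNormed ℤ z (List.ofFn (f ∘ σ))
  have hzσ (σ : Equiv.Perm (Fin n)) : z ∉ List.ofFn (f ∘ σ) := by
    simpa [List.mem_ofFn] using fun i h => hz ⟨σ i, h⟩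
  have hv : LinearIndependent ℤ v :=
    (linearIndependent_leftNormed (R := ℤ) z).comp
      (fun σ : Equiv.Perm (Fin n) => ⟨List.ofFn (f ∘ σ), hzσ σ⟩)
      fun σ τ h => Equiv.coe_fn_injective <|
        hf.comp_left (List.ofFn_injective (congrArg Subtype.val h))
  have hspan : Submodule.span ℤ (Set.range v) =
      Submodule.span ℤ {x | IsLieMono x (z ::ₘ (List.ofFn f : Multiset (Fin m)))} := by
    rw [span_isLieMono_eq_spanLeftNormed (Multiset.mem_cons_self _ _), Multiset.erase_cons_head,
      spanLeftNormed, List.setOf_coe_eq_ofFn_eq_range hf, ← Set.range_comp]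
    rfl
  exact ⟨(Module.Basis.span hv).map (LinearEquiv.ofEq _ _ hspan), fun σ => by
    rw [Module.Basis.map_apply, LinearEquiv.coe_ofEq_apply, Module.Basis.span_apply]⟩

theorem Fin.mk_notMem_range_castLE {n m k : ℕ} (hnk : n ≤ k) (hkm : k < m) (hnm : n ≤ m) :
    (⟨k, hkm⟩ : Fin m) ∉ Set.range (Fin.castLE hnm) := by
  rintro ⟨i, hi⟩
  have := congrArg Fin.val hi
  simp only [Fin.val_castLE] at this
  omega

theorem Fin.univ_val_map_castLE_eq_cons {d m : ℕ} (hd : 0 < d) (hdm : d ≤ m) :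
    (Finset.univ : Finset (Fin d)).val.map (Fin.castLE hdm) =
      (⟨d - 1, by omega⟩ : Fin m) ::ₘ
        (List.ofFn (Fin.castLE (by omega : d - 1 ≤ m)) : Multiset (Fin m)) := by
  refine (Multiset.Nodup.ext ?_ ?_).mpr fun a => ?_
  · exact Finset.univ.nodup.map (Fin.castLE_injective hdm)
  · exact Multiset.nodup_cons.mpr
      ⟨fun h => Fin.mk_notMem_range_castLE le_rfl _ _ (List.mem_ofFn.mp h),
        Multiset.coe_nodup.mpr (List.nodup_ofFn.mpr (Fin.castLE_injective _))⟩
  · simp only [Multiset.mem_map, Finset.mem_val, Finset.mem_univ, true_and, Multiset.mem_cons,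
      Multiset.mem_coe, List.mem_ofFn, Fin.ext_iff, Fin.val_castLE, Fin.exists_iff,
      exists_prop, exists_eq_right]
    omega

/-- The multilinear component of degree d (each of the d chosen generators
appearing exactly once) of the free Lie algebra over ℤ on m generators is a free ℤ-module
with basis the (d−1)! left-normed brackets [X_{σ(1)},[…,[X_{σ(d−1)}, X_d]…]]. -/
theorem stmt1 (m d : ℕ) (hd : 0 < d) (hdm : d ≤ m) :
    ∃ b : Module.Basis (Equiv.Perm (Fin (d - 1))) ℤ
      (Submodule.span ℤ {x : FreeLieAlgebra ℤ (Fin m) |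
        IsLieMono x (((Finset.univ : Finset (Fin d)).val.map (Fin.castLE hdm)))}),
      ∀ σ : Equiv.Perm (Fin (d - 1)),
        (b σ : FreeLieAlgebra ℤ (Fin m)) =
          lnb ((List.ofFn fun i : Fin (d - 1) =>
              FreeLieAlgebra.of ℤ (⟨(σ i).1, by have := (σ i).2; omega⟩ : Fin m))
            ++ [FreeLieAlgebra.of ℤ (⟨d - 1, by omega⟩ : Fin m)]) := by
  rw [Fin.univ_val_map_castLE_eq_cons hd hdm]
  have hz : (⟨d - 1, by omega⟩ : Fin m) ∉ Set.range (Fin.castLE (by omega : d - 1 ≤ m)) :=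
    Fin.mk_notMem_range_castLE le_rfl _ _
  obtain ⟨b, hb⟩ := exists_basis_span_isLieMono (Fin.castLE_injective _) hz
  exact ⟨b, fun σ => (hb σ).trans (by rw [leftNormed, List.map_ofFn]; rfl)⟩
end

section
/- Let G be a group normally generated by elements g₁,…,g_m, and let M be the quotient of G by the normal subgroup generated by all commutators [g_i, h·g_i·h⁻¹] for 1 ≤ i ≤ m and h ∈ G. Then M is nilpotent of class at most m; in particular the (m+1)-st term of its lower central series is trivial. -/
/-!
In the quotient, the normal closure `Aᵢ` of the image of `gᵢ` is abelian: two conjugates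
`u gᵢ u⁻¹` and `v gᵢ v⁻¹` commute because conjugating by `u⁻¹` turns them into `gᵢ` and
`h gᵢ h⁻¹` with `h = u⁻¹ v`, which commute by the defining relations. So the quotient is the join
of `m` abelian normal subgroups. For normal subgroups, `⁅⋂_{i ∈ s} Aᵢ, Aⱼ⁆` lies in
`⋂_{i ∈ s ∪ {j}} Aᵢ`, and it is trivial when `j ∈ s`; hence `γ_{k+1}` lies in the join of the
intersections of `k + 1` distinct `Aᵢ`, which is trivial once `k + 1 > m`.
-/

open Subgroup
open scoped commutatorElement

namespace Subgroup

variable {M : Type*} [Group M]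

theorem commutator_le_iff_map_le_centralizer (H K L : Subgroup M) [L.Normal] :
    ⁅H, K⁆ ≤ L ↔ H.map (QuotientGroup.mk' L) ≤ centralizer (K.map (QuotientGroup.mk' L)) := by
  rw [← commutator_eq_bot_iff_le_centralizer, ← map_commutator, map_eq_bot_iff,
    QuotientGroup.ker_mk']

theorem commutator_iSup_left_le {ι : Sort*} (A : ι → Subgroup M) (K L : Subgroup M) [L.Normal]
    (h : ∀ i, ⁅A i, K⁆ ≤ L) : ⁅⨆ i, A i, K⁆ ≤ L := by
  simp only [commutator_le_iff_map_le_centralizer] at h ⊢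
  rw [map_iSup]
  exact iSup_le h

theorem isMulCommutative_normalClosure_singleton {x : M} (h : ∀ y : M, Commute x (y * x * y⁻¹)) :
    IsMulCommutative (normalClosure {x}) := by
  have hconj : ∀ a ∈ Group.conjugatesOfSet {x}, ∃ u : M, u * x * u⁻¹ = a := by
    intro a ha
    obtain ⟨_, rfl, hxa⟩ := Group.mem_conjugatesOfSet_iff.mp ha
    exact isConj_iff.mp hxa
  refine isMulCommutative_closure fun a ha b hb => ?_
  obtain ⟨u, rfl⟩ := hconj a ha
  obtain ⟨v, rfl⟩ := hconj b hb
  have key : Commute x ((u⁻¹ * v) * x * (u⁻¹ * v)⁻¹) := h _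
  rw [← Commute.conj_iff u] at key
  convert key.eq using 2 <;> group

variable {ι : Type*} (A : ι → Subgroup M) [∀ i, (A i).Normal]

theorem commutator_iInf_le_iInf_insert [DecidableEq ι] (s : Finset ι) (j : ι) :
    ⁅⨅ i ∈ s, A i, A j⁆ ≤ ⨅ i ∈ insert j s, A i := by
  refine le_iInf₂ fun i hi => ?_
  rcases Finset.mem_insert.mp hi with rfl | hi
  · exact commutator_le_right _ _
  · exact (commutator_mono (iInf₂_le i hi) le_rfl).trans (commutator_le_left _ _)

theorem top_lowerCentralSeries_le_iSup_iInf (hA : ∀ i, IsMulCommutative (A i))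
    (hsup : ⨆ i, A i = ⊤) (k : ℕ) :
    (⊤ : Subgroup M).lowerCentralSeries k ≤
      ⨆ s : {s : Finset ι // s.card = k + 1}, ⨅ i ∈ s.1, A i := by
  classical
  have : ∀ s : Finset ι, (⨅ i ∈ s, A i).Normal := fun s =>
    normal_iInf_normal fun i => normal_iInf_normal fun _ => inferInstance
  induction k with
  | zero =>
    rw [lowerCentralSeries_zero, ← hsup]
    exact iSup_le fun i => le_iSup_of_le ⟨{i}, rfl⟩ (by simp)
  | succ k ih =>
    refine (commutator_mono ih hsup.ge).trans ?_
    rw [commutator_comm]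
    refine commutator_iSup_left_le _ _ _ fun j => ?_
    rw [commutator_comm]
    refine commutator_iSup_left_le _ _ _ fun s => ?_
    by_cases hj : j ∈ s.1
    · calc ⁅⨅ i ∈ s.1, A i, A j⁆ ≤ ⁅A j, A j⁆ := commutator_mono (iInf₂_le j hj) le_rfl
        _ = ⊥ := commutator_self_eq_bot_iff.mpr (hA j)
        _ ≤ _ := bot_le
    · exact (commutator_iInf_le_iInf_insert A s.1 j).trans
        (le_iSup_of_le ⟨insert j s.1, by rw [Finset.card_insert_of_notMem hj, s.2]⟩ le_rfl)

theorem top_lowerCentralSeries_card_eq_bot [Fintype ι] (hA : ∀ i, IsMulCommutative (A i))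
    (hsup : ⨆ i, A i = ⊤) : (⊤ : Subgroup M).lowerCentralSeries (Fintype.card ι) = ⊥ := by
  have : IsEmpty {s : Finset ι // s.card = Fintype.card ι + 1} :=
    ⟨fun s => by have := s.1.card_le_univ; omega⟩
  simpa only [iSup_of_empty, le_bot_iff] using
    top_lowerCentralSeries_le_iSup_iInf A hA hsup (Fintype.card ι)

end Subgroup

/-- If G is normally generated by g₁,…,g_m, then the Milnor group
M = G / ⟪[gᵢ, h gᵢ h⁻¹]⟫ is nilpotent of class at most m: γ_{m+1}(M) = 1,
i.e. `lowerCentralSeries M m = ⊥` (Mathlib's `lowerCentralSeries M 0 = ⊤` is γ₁). -/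
theorem stmt6 (m : ℕ) (G : Type*) [Group G] (g : Fin m → G)
    (hgen : Subgroup.normalClosure (Set.range g) = ⊤) :
    Subgroup.lowerCentralSeries (⊤ : Subgroup
      (G ⧸ Subgroup.normalClosure
        {x : G | ∃ (i : Fin m) (h : G), x = ⁅g i, h * g i * h⁻¹⁆})) m = ⊥ := by
  set N := normalClosure {x : G | ∃ (i : Fin m) (h : G), x = ⁅g i, h * g i * h⁻¹⁆}
  let π := QuotientGroup.mk' N
  have hπ : Function.Surjective π := QuotientGroup.mk'_surjective N
  have hcomm : ∀ i, IsMulCommutative (normalClosure {π (g i)}) := by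
    refine fun i => isMulCommutative_normalClosure_singleton fun y => ?_
    obtain ⟨w, rfl⟩ := hπ y
    rw [← commutatorElement_eq_one_iff_commute, ← map_mul, ← map_inv, ← map_mul,
      ← map_commutatorElement, ← MonoidHom.mem_ker, QuotientGroup.ker_mk']
    exact subset_normalClosure ⟨i, w, rfl⟩
  have hsup : ⨆ i, normalClosure {π (g i)} = ⊤ := by
    rw [eq_top_iff, ← map_top_of_surjective π hπ, ← hgen, map_normalClosure _ _ hπ,
      ← Set.range_comp]
    exact normalClosure_le_normal (Set.range_subset_iff.mpr fun i =>
      le_iSup (fun i => normalClosure {π (g i)}) i (subset_normalClosure rfl))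
  simpa only [Fintype.card_fin] using top_lowerCentralSeries_card_eq_bot _ hcomm hsup
end

section
/- Let G be a group normally generated by elements g₁,…,g_m, and let M be the quotient of G by the normal subgroup generated by all commutators [g_i, h·g_i·h⁻¹] for 1 ≤ i ≤ m and h ∈ G. Then M is generated (as a group) by the images of g₁,…,g_m. -/
/-! Induct on the number of generators. The normal closure `N` of a generator `s` is generated by
conjugates of `s`, which all commute with `s`, so `N` centralizes `s`. By induction the other
generators generate `G` modulo `N`, so every conjugate of `s` is already a conjugate by an element of
the subgroup they generate; hence `N`, and with it `G`, lies in the subgroup generated by all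
generators. In the Milnor group the generators commute with their conjugates, and normal
generation passes to quotients. -/

open Subgroup

open scoped commutatorElement

namespace Subgroup

variable {G : Type*} [Group G]

theorem normalClosure_singleton_le_centralizer {s : G} (hs : ∀ h : G, Commute s (h * s * h⁻¹)) :
    normalClosure {s} ≤ centralizer {s} := by
  refine (closure_le _).2 fun x hx => ?_
  obtain ⟨a, rfl, hconj⟩ := Group.mem_conjugatesOfSet_iff.1 hx
  obtain ⟨h, rfl⟩ := isConj_iff.1 hconj
  rw [SetLike.mem_coe, mem_centralizer_singleton_iff]
  exact (hs h).eq.symm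

/-- The auxiliary normal subgroup `K` lets the induction run inside `G`: removing `s` from the
generators is done by enlarging `K` by the normal closure of `s` instead of passing to a quotient. -/
theorem closure_sup_eq_top_of_normalClosure_sup_eq_top {S : Set G} (hS : S.Finite)
    (hcomm : ∀ s ∈ S, ∀ h : G, Commute s (h * s * h⁻¹)) (K : Subgroup G) [K.Normal]
    (hK : normalClosure S ⊔ K = ⊤) : closure S ⊔ K = ⊤ := by
  induction S, hS using Set.Finite.induction_on generalizing K with
  | empty => simpa using hK
  | @insert s T _ _ ih =>
    set N := normalClosure ({s} : Set G)
    set L := closure (insert s T) ⊔ K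
    have hT : closure T ⊔ (K ⊔ N) = ⊤ := by
      refine ih (fun t ht => hcomm t (Set.mem_insert_of_mem s ht)) (K ⊔ N) ?_
      rw [← hK, Set.insert_eq, normalClosure_union, sup_comm K, sup_left_comm, sup_assoc]
    have hNs : N ≤ centralizer {s} :=
      normalClosure_singleton_le_centralizer (hcomm s (Set.mem_insert s T))
    have hTL : closure T ≤ L := (closure_mono (Set.subset_insert s T)).trans le_sup_left
    have hsL : s ∈ L := mem_sup_left (subset_closure (Set.mem_insert s T))
    -- For `x = h * k * n` with `n ∈ N` central for `s`, `x s x⁻¹ = (h k) s (h k)⁻¹`.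
    have hNL : N ≤ L := by
      refine (closure_le _).2 fun y hy => ?_
      obtain ⟨a, rfl, hconj⟩ := Group.mem_conjugatesOfSet_iff.1 hy
      obtain ⟨x, rfl⟩ := isConj_iff.1 hconj
      obtain ⟨h, hh, m, hm, rfl⟩ := mem_sup_of_normal_right.1 (hT ▸ mem_top x)
      obtain ⟨k, hk, n, hn, rfl⟩ := mem_sup_of_normal_right.1 hm
      have hns : n * a * n⁻¹ = a := by
        rw [mem_centralizer_singleton_iff.1 (hNs hn), mul_inv_cancel_right]
      have hkL : k ∈ L := mem_sup_right hk
      rw [show h * (k * n) * a * (h * (k * n))⁻¹ = h * k * (n * a * n⁻¹) * k⁻¹ * h⁻¹ by group, hns]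
      exact mul_mem (mul_mem (mul_mem (mul_mem (hTL hh) hkL) hsL) (inv_mem hkL)) (inv_mem (hTL hh))
    exact top_unique (hT ▸ sup_le hTL (sup_le le_sup_right hNL))

theorem closure_eq_top_of_normalClosure_eq_top {S : Set G} (hS : S.Finite)
    (hcomm : ∀ s ∈ S, ∀ h : G, Commute s (h * s * h⁻¹)) (hN : normalClosure S = ⊤) :
    closure S = ⊤ := by
  simpa using closure_sup_eq_top_of_normalClosure_sup_eq_top hS hcomm ⊥ (by simpa using hN)

end Subgroup

/-- If G is normally generated by g₁,…,g_m, then the Milnor group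
M = G / ⟪[gᵢ, h gᵢ h⁻¹]⟫ is generated (as a group) by the images of the gᵢ. -/
theorem stmt7 (m : ℕ) (G : Type*) [Group G] (g : Fin m → G)
    (hgen : Subgroup.normalClosure (Set.range g) = ⊤) :
    Subgroup.closure
      (Set.range fun i : Fin m =>
        (QuotientGroup.mk (g i) :
          G ⧸ Subgroup.normalClosure
            {x : G | ∃ (i : Fin m) (h : G), x = ⁅g i, h * g i * h⁻¹⁆})) = ⊤ := by
  set R := normalClosure {x : G | ∃ (i : Fin m) (h : G), x = ⁅g i, h * g i * h⁻¹⁆}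
  have hmk : Function.Surjective (QuotientGroup.mk' R) := QuotientGroup.mk'_surjective R
  refine closure_eq_top_of_normalClosure_eq_top (Set.finite_range _) ?_ ?_
  · rintro _ ⟨i, rfl⟩ h
    induction h using QuotientGroup.induction_on with | H h => ?_
    rw [← commutatorElement_eq_one_iff_commute]
    exact (QuotientGroup.eq_one_iff _).2 (subset_normalClosure ⟨i, h, rfl⟩)
  · rw [show (Set.range fun i => (g i : G ⧸ R)) = QuotientGroup.mk' R '' Set.range g from
      (Set.range_comp _ g), ← map_normalClosure _ _ hmk, hgen, map_top_of_surjective _ hmk]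
end

section
/- Fix distinct symbols i, i′, i″, j in an alphabet containing {1,…,m} ∪ {i′, i″}, with i, j ∈ {1,…,m} and i ≠ j. Let V be the free abelian group on words of length k over this alphabet. Define ℤ-linear maps on V as follows: δ_i sends a basis word w to the sum over all ways of replacing each occurrence of i independently by either i or i′; δ_{i′} similarly replaces each occurrence of i′ independently by either i′ or i″; s_{i′} sends a basis word w to (−1)^{r} w where r is the number of occurrences of i′ in w; σ_{i′ i″} replaces every occurrence of i″ by i′; and σ_{j i′} replaces every occurrence of i′ by j. Then the composition σ_{j i′} ∘ σ_{i′ i″} ∘ s_{i′} ∘ δ_{i′} ∘ δ_i is the identity on the ℤ-submodule spanned by words over the alphabet {1,…,m}. -/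
open Finsupp

private lemma liftS {α β : Type} (f : α → (β →₀ ℤ)) (a : α) :
    Finsupp.lift (β →₀ ℤ) ℤ α f (Finsupp.single a 1) = f a := by
  rw [Finsupp.lift_apply, Finsupp.sum_single_index (by exact zero_smul ℤ (f a)), one_smul]

/-- On the free abelian group on words of length k over the alphabet
{1,…,m} ∪ {i′, i″} (modeled as `Fin m ⊕ Fin 2`, with i′ = inr 0 and i″ = inr 1),
the composition σ_{j i′} ∘ σ_{i′ i″} ∘ s_{i′} ∘ δ_{i′} ∘ δ_i is the identity on the
ℤ-submodule spanned by words whose letters all lie in {1,…,m}. -/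
theorem stmt9 (m k : ℕ) (i j : Fin m) (hij : i ≠ j) :
    letI A := Sum (Fin m) (Fin 2)
    letI V := (Fin k → A) →₀ ℤ
    letI i' : A := Sum.inr 0
    letI i'' : A := Sum.inr 1
    -- δ_i : replace each occurrence of i independently by i or i′
    letI δi : V →ₗ[ℤ] V := Finsupp.lift V ℤ (Fin k → A)
      (fun w => ∑ S ∈ (Finset.univ.filter fun p => w p = Sum.inl i).powerset,
        Finsupp.single (fun p => if p ∈ S then i' else w p) 1)
    -- δ_{i′} : replace each occurrence of i′ independently by i′ or i″
    letI δi' : V →ₗ[ℤ] V := Finsupp.lift V ℤ (Fin k → A)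
      (fun w => ∑ S ∈ (Finset.univ.filter fun p => w p = i').powerset,
        Finsupp.single (fun p => if p ∈ S then i'' else w p) 1)
    -- s_{i′} : sign (−1)^{number of occurrences of i′}
    letI si' : V →ₗ[ℤ] V := Finsupp.lift V ℤ (Fin k → A)
      (fun w => ((-1 : ℤ) ^ (Finset.univ.filter fun p => w p = i').card) •
        Finsupp.single w 1)
    -- σ_{i′ i″} : replace every occurrence of i″ by i′
    letI σ1 : V →ₗ[ℤ] V := Finsupp.lift V ℤ (Fin k → A)
      (fun w => Finsupp.single (fun p => if w p = i'' then i' else w p) 1)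
    -- σ_{j i′} : replace every occurrence of i′ by j
    letI σ2 : V →ₗ[ℤ] V := Finsupp.lift V ℤ (Fin k → A)
      (fun w => Finsupp.single (fun p => if w p = i' then Sum.inl j else w p) 1)
    ∀ v ∈ Submodule.span ℤ {v : V | ∃ w : Fin k → A,
        (∀ p, ∃ l : Fin m, w p = Sum.inl l) ∧ v = Finsupp.single w 1},
      σ2 (σ1 (si' (δi' (δi v)))) = v := by
  intro v hv
  induction hv using Submodule.span_induction with
  | zero => simp
  | add x y hx' hy' hx hy =>
    rw [map_add, map_add, map_add, map_add, map_add, hx, hy]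
  | smul a x hx' hx =>
    rw [map_smul, map_smul, map_smul, map_smul, map_smul, hx]
  | mem x hx =>
    obtain ⟨w, hw, rfl⟩ := hx
    have hwne : ∀ p (c : Fin 2), w p ≠ Sum.inr c := by
      intro p c h
      obtain ⟨l, hl⟩ := hw p
      rw [hl] at h
      exact Sum.inl_ne_inr h
    rw [liftS, map_sum, map_sum, map_sum, map_sum]
    have main : ∀ S ∈ (Finset.univ.filter fun p => w p = Sum.inl i).powerset,
        (Finsupp.lift ((Fin k → Sum (Fin m) (Fin 2)) →₀ ℤ) ℤ (Fin k → Sum (Fin m) (Fin 2))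
          (fun u => Finsupp.single (fun p => if u p = Sum.inr 0 then Sum.inl j else u p) 1))
        ((Finsupp.lift ((Fin k → Sum (Fin m) (Fin 2)) →₀ ℤ) ℤ (Fin k → Sum (Fin m) (Fin 2))
          (fun u => Finsupp.single (fun p => if u p = Sum.inr 1 then Sum.inr 0 else u p) 1))
        ((Finsupp.lift ((Fin k → Sum (Fin m) (Fin 2)) →₀ ℤ) ℤ (Fin k → Sum (Fin m) (Fin 2))
          (fun u => ((-1 : ℤ) ^ (Finset.univ.filter fun p => u p = Sum.inr 0).card) •
            Finsupp.single u 1))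
        ((Finsupp.lift ((Fin k → Sum (Fin m) (Fin 2)) →₀ ℤ) ℤ (Fin k → Sum (Fin m) (Fin 2))
          (fun u => ∑ T ∈ (Finset.univ.filter fun p => u p = Sum.inr 0).powerset,
            Finsupp.single (fun p => if p ∈ T then Sum.inr 1 else u p) 1))
        (Finsupp.single (fun p => if p ∈ S then Sum.inr 0 else w p) 1)))) =
        (if S = ∅ then (1 : ℤ) else 0) • Finsupp.single w 1 := by
      intro S hSP
      -- the positions holding i′ in the modified word are exactly S
      have hfS : (Finset.univ.filter fun p =>
          (if p ∈ S then (Sum.inr 0 : Sum (Fin m) (Fin 2)) else w p) = Sum.inr 0) = S := by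
        ext p
        simp only [Finset.mem_filter, Finset.mem_univ, true_and]
        by_cases h : p ∈ S <;> simp [h, hwne p 0]
      rw [liftS, hfS, map_sum, map_sum, map_sum]
      have inner : ∀ T ∈ S.powerset,
          (Finsupp.lift ((Fin k → Sum (Fin m) (Fin 2)) →₀ ℤ) ℤ (Fin k → Sum (Fin m) (Fin 2))
            (fun u => Finsupp.single (fun p => if u p = Sum.inr 0 then Sum.inl j else u p) 1))
          ((Finsupp.lift ((Fin k → Sum (Fin m) (Fin 2)) →₀ ℤ) ℤ (Fin k → Sum (Fin m) (Fin 2))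
            (fun u => Finsupp.single (fun p => if u p = Sum.inr 1 then Sum.inr 0 else u p) 1))
          ((Finsupp.lift ((Fin k → Sum (Fin m) (Fin 2)) →₀ ℤ) ℤ (Fin k → Sum (Fin m) (Fin 2))
            (fun u => ((-1 : ℤ) ^ (Finset.univ.filter fun p => u p = Sum.inr 0).card) •
              Finsupp.single u 1))
          (Finsupp.single (fun p => if p ∈ T then Sum.inr 1 else
              if p ∈ S then Sum.inr 0 else w p) 1))) =
          ((-1 : ℤ) ^ (S \ T).card) •
            Finsupp.single (fun p => if p ∈ S then (Sum.inl j : Sum (Fin m) (Fin 2)) else w p) 1 := by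
        intro T hTS
        rw [Finset.mem_powerset] at hTS
        have hfT : (Finset.univ.filter fun p =>
            (if p ∈ T then (Sum.inr 1 : Sum (Fin m) (Fin 2)) else
              if p ∈ S then Sum.inr 0 else w p) = Sum.inr 0) = S \ T := by
          ext p
          simp only [Finset.mem_filter, Finset.mem_univ, true_and, Finset.mem_sdiff]
          by_cases hT : p ∈ T
          · simp [hT, hTS hT]
          · by_cases hS : p ∈ S <;> simp [hT, hS, hwne p 0]
        rw [liftS, hfT, map_smul, map_smul, liftS, liftS]
        congr 2
        funext p
        by_cases hT : p ∈ T
        · have hS : p ∈ S := hTS hT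
          simp [hT, hS]
        · by_cases hS : p ∈ S
          · simp [hT, hS]
          · obtain ⟨l, hl⟩ := hw p
            simp [hT, hS, hl]
      rw [Finset.sum_congr rfl inner, ← Finset.sum_smul]
      have hsum : ∑ T ∈ S.powerset, ((-1 : ℤ) ^ (S \ T).card)
          = if S = ∅ then (1 : ℤ) else 0 := by
        have reidx : ∑ T ∈ S.powerset, ((-1 : ℤ) ^ (S \ T).card)
            = ∑ T ∈ S.powerset, ((-1 : ℤ) ^ T.card) := by
          apply Finset.sum_nbij' (i := fun T => S \ T) (j := fun T => S \ T)
          · intro T hT; simp only [Finset.mem_powerset] at *; exact Finset.sdiff_subset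
          · intro T hT; simp only [Finset.mem_powerset] at *; exact Finset.sdiff_subset
          · intro T hT; simp only [Finset.mem_powerset] at hT
            exact Finset.sdiff_sdiff_eq_self hT
          · intro T hT; simp only [Finset.mem_powerset] at hT
            exact Finset.sdiff_sdiff_eq_self hT
          · intro T hT; rfl
        rw [reidx, Finset.sum_powerset_neg_one_pow_card]
      rw [hsum]
      by_cases hS : S = ∅
      · subst hS; simp
      · simp [hS]
    rw [Finset.sum_congr rfl main]
    simp only [ite_smul, one_smul, zero_smul, Finset.sum_ite_eq', Finset.mem_powerset]
    simp
end
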